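/- Let X be a compact Hausdorff space. The extreme points of the convex set of Radon Borel probability measures on X are exactly the Dirac measures δ_x for x ∈ X: every Dirac measure is an extreme point, and every extreme point is a Dirac measure. -/

import Mathlib

/-!
If `0 < μ s < 1` for some Borel set `s`, then `μ` is the proper convex combination
`μ s • μ[|s] + μ sᶜ • μ[|sᶜ]` of two distinct Radon probability measures, so an extreme `μ`
takes only the values `0` and `1`. For such a `μ`, if no singleton had full measure, every
point would have an open neighbourhood of measure zero (the complement of a compact set of
measure one avoiding it), and compactness of `X` would give `μ X = 0`. Conversely, each
summand of a proper convex combination equal to `δ_x` is dominated by a multiple of `δ_x`,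
hence is `δ_x`.
-/

open MeasureTheory NNReal ENNReal ProbabilityTheory Topology

namespace MeasureTheory

variable {X : Type*} [MeasurableSpace X]

theorem Measure.eq_dirac_of_measure_compl_singleton_eq_zero [MeasurableSingletonClass X]
    (μ : Measure X) [IsProbabilityMeasure μ] {x : X} (h : μ {x}ᶜ = 0) :
    μ = Measure.dirac x := by
  have hx : μ {x} = 1 := (prob_compl_eq_zero_iff (measurableSet_singleton x)).1 h
  calc μ = μ.restrict {x} := (Measure.restrict_eq_self_of_ae_mem h).symm
    _ = Measure.dirac x := by rw [Measure.restrict_singleton, hx, one_smul]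

theorem Measure.eq_dirac_of_smul_le_dirac [MeasurableSingletonClass X] {ν : Measure X}
    [IsProbabilityMeasure ν] {c : ℝ≥0} (hc : c ≠ 0) {x : X} (h : c • ν ≤ Measure.dirac x) :
    ν = Measure.dirac x := by
  refine ν.eq_dirac_of_measure_compl_singleton_eq_zero ?_
  have hle := h {x}ᶜ
  rw [Measure.dirac_apply' _ (measurableSet_singleton x).compl,
    Set.indicator_of_notMem (by simp), Measure.smul_apply, nonpos_iff_eq_zero,
    smul_eq_zero] at hle
  exact hle.resolve_left hc

theorem Measure.innerRegular_dirac [TopologicalSpace X] (x : X) :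
    (Measure.dirac x).InnerRegular := by
  refine ⟨fun s hs r hr => ?_⟩
  have hx : x ∈ s := by
    by_contra hx
    rw [Measure.dirac_apply' _ hs, Set.indicator_of_notMem hx] at hr
    exact ENNReal.not_lt_zero hr
  exact ⟨{x}, Set.singleton_subset_iff.2 hx, isCompact_singleton,
    hr.trans_le (prob_le_one.trans_eq (Measure.dirac_apply_of_mem (Set.mem_singleton x)).symm)⟩

theorem _root_.ProbabilityTheory.innerRegular_cond [TopologicalSpace X] (μ : Measure X)
    [IsFiniteMeasure μ] [μ.InnerRegular] (s : Set X) : μ[|s].InnerRegular := by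
  rw [ProbabilityTheory.cond]
  infer_instance

theorem _root_.ProbabilityTheory.eq_smul_cond_add_smul_cond_compl (μ : Measure X)
    [IsProbabilityMeasure μ] {s : Set X} (hs : MeasurableSet s) :
    μ = (μ s).toNNReal • μ[|s] + (1 - (μ s).toNNReal) • μ[|sᶜ] := by
  have ht : ((μ s).toNNReal : ℝ≥0∞) = μ s := ENNReal.coe_toNNReal (measure_ne_top μ s)
  have ht' : ((1 - (μ s).toNNReal : ℝ≥0) : ℝ≥0∞) = μ sᶜ := by
    rw [ENNReal.coe_sub, ht, ENNReal.coe_one, prob_compl_eq_one_sub hs]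
  ext u hu
  simp only [Measure.add_apply, Measure.smul_apply, ENNReal.smul_def, smul_eq_mul, ht, ht']
  rw [mul_comm, mul_comm (μ sᶜ), cond_add_cond_compl_eq hs]

theorem isZeroOneMeasure_of_extreme_innerRegular [TopologicalSpace X] (μ : Measure X)
    [IsProbabilityMeasure μ] [μ.InnerRegular]
    (hext : ∀ ν₁ ν₂ : Measure X,
        (IsProbabilityMeasure ν₁ ∧ ν₁.InnerRegular) →
        (IsProbabilityMeasure ν₂ ∧ ν₂.InnerRegular) →
        ∀ t : ℝ≥0, 0 < t → t < 1 → μ = t • ν₁ + (1 - t) • ν₂ → ν₁ = ν₂) :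
    IsZeroOneMeasure μ where
  zero_one₀ s hs := by
    by_contra! h
    obtain ⟨h0, h1⟩ := h
    have hc0 : μ sᶜ ≠ 0 := fun hc => h1 ((prob_compl_eq_zero_iff hs).1 hc)
    have ht0 : 0 < (μ s).toNNReal := ENNReal.toNNReal_pos h0 (measure_ne_top μ s)
    have ht1 : (μ s).toNNReal < 1 := by
      rw [← ENNReal.coe_lt_one_iff, ENNReal.coe_toNNReal (measure_ne_top μ s)]
      exact prob_le_one.lt_of_ne h1
    have hcond : μ[|s] = μ[|sᶜ] :=
      hext _ _ ⟨cond_isProbabilityMeasure h0, innerRegular_cond μ s⟩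
        ⟨cond_isProbabilityMeasure hc0, innerRegular_cond μ sᶜ⟩ _ ht0 ht1
        (eq_smul_cond_add_smul_cond_compl μ hs)
    have hs_eq := congrArg (fun ν : Measure X => ν s) hcond
    simp [cond_apply_self h0 (measure_ne_top μ s), cond_apply hs.compl] at hs_eq

theorem IsZeroOneMeasure.exists_eq_dirac_of_innerRegular [TopologicalSpace X] [CompactSpace X]
    [T2Space X] [BorelSpace X] (μ : Measure X) [IsProbabilityMeasure μ] [μ.InnerRegular]
    [IsZeroOneMeasure μ] : ∃ x, μ = Measure.dirac x := by
  suffices ∃ x, μ {x}ᶜ = 0 from this.imp fun x => μ.eq_dirac_of_measure_compl_singleton_eq_zero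
  by_contra! h
  have hnull : ∀ x, ∃ U ∈ 𝓝 x, μ U = 0 := fun x => by
    obtain ⟨K, hKx, hK, hKpos⟩ :=
      (measurableSet_singleton x).compl.exists_lt_isCompact (pos_iff_ne_zero.2 (h x))
    have hK1 : μ K = 1 := (μ.zero_one K).resolve_left hKpos.ne'
    exact ⟨Kᶜ, hK.isClosed.compl_mem_nhds fun hxK => hKx hxK rfl,
      (prob_compl_eq_zero_iff hK.measurableSet).2 hK1⟩
  have huniv : μ Set.univ = 0 := isCompact_univ.measure_zero_of_nhdsWithin fun x _ => by
    simpa only [nhdsWithin_univ] using hnull x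
  simp at huniv

end MeasureTheory

/-- The extreme points of the convex set of Radon (inner regular) Borel probability
measures on a compact Hausdorff space `X` are exactly the Dirac measures `δ_x`, `x ∈ X`:
a member `μ` of this set is extreme (i.e. whenever `μ = t • ν₁ + (1 - t) • ν₂` with
`ν₁, ν₂` in the set and `0 < t < 1`, necessarily `ν₁ = ν₂`) iff `μ = δ_x` for some `x`. -/
theorem stmt_14 {X : Type*} [TopologicalSpace X] [CompactSpace X] [T2Space X]
    [MeasurableSpace X] [BorelSpace X] (μ : Measure X) :
    ((IsProbabilityMeasure μ ∧ μ.InnerRegular) ∧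
      ∀ ν₁ ν₂ : Measure X,
        (IsProbabilityMeasure ν₁ ∧ ν₁.InnerRegular) →
        (IsProbabilityMeasure ν₂ ∧ ν₂.InnerRegular) →
        ∀ t : ℝ≥0, 0 < t → t < 1 → μ = t • ν₁ + (1 - t) • ν₂ → ν₁ = ν₂) ↔
    ∃ x : X, μ = Measure.dirac x := by
  constructor
  · rintro ⟨⟨hprob, hreg⟩, hext⟩
    have := isZeroOneMeasure_of_extreme_innerRegular μ hext
    exact IsZeroOneMeasure.exists_eq_dirac_of_innerRegular μ
  · rintro ⟨x, rfl⟩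
    refine ⟨⟨inferInstance, Measure.innerRegular_dirac x⟩, ?_⟩
    rintro ν₁ ν₂ ⟨hν₁, -⟩ ⟨hν₂, -⟩ t ht0 ht1 h
    have h₁ : t • ν₁ ≤ Measure.dirac x := h ▸ Measure.le_add_right le_rfl
    have h₂ : (1 - t) • ν₂ ≤ Measure.dirac x := h ▸ Measure.le_add_left le_rfl
    rw [Measure.eq_dirac_of_smul_le_dirac ht0.ne' h₁,
      Measure.eq_dirac_of_smul_le_dirac (tsub_pos_of_lt ht1).ne' h₂]
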